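/- arXiv:1702.02809 — 6 statements merged into one kernel-verified Lean document; each statement's English description precedes it below -/
import Mathlib

section
/- Let f be a non-decreasing submodular set function on subsets of a finite set S with f(∅) = 0, let k ≥ 1, and let Q_0 = ∅, Q_1, …, Q_k be a greedy sequence for f of length k. Then for every subset Q* ⊆ S with |Q*| ≤ k, f(Q_k) ≥ (1 − (1 − 1/k)^k) · f(Q*). -/
/-!
Submodularity bounds the gain of adding a whole set `Q*` to `Q θ` by the sum of the single-element
gains, each of which is at most the greedy gain `f (Q (θ + 1)) - f (Q θ)`. So every greedy step
closes at least a `1/k` fraction of the gap `f Q* - f (Q θ)`, and after `k` steps the gap is at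
most `(1 - 1/k)^k f Q*`.
-/

open Finset

/-- A greedy sequence of length `k` for a set function `f` on subsets of a finite type `S`:
`Q 0 = ∅` and at each step `θ` (for `1 ≤ θ ≤ k`), `Q θ` is obtained from `Q (θ-1)` by
inserting a new element `s_θ ∈ S \ Q (θ-1)`, chosen so that no other single insertion
gives a larger value of `f`. -/
def IsGreedySeq {S : Type*} [DecidableEq S] (f : Finset S → ℝ)
    (Q : ℕ → Finset S) (k : ℕ) : Prop :=
  Q 0 = ∅ ∧ ∀ θ, 1 ≤ θ → θ ≤ k →
    (∃ s, s ∉ Q (θ - 1) ∧ Q θ = insert s (Q (θ - 1))) ∧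
    ∀ s : S, f (insert s (Q (θ - 1))) ≤ f (Q θ)

section Submodular

variable {S : Type*} [DecidableEq S] {f : Finset S → ℝ}

theorem insert_sub_le_insert_sub_of_subset (hmono : Monotone f)
    (hsub : ∀ Q R : Finset S, f (Q ∪ R) + f (Q ∩ R) ≤ f Q + f R)
    {A X : Finset S} (hAX : A ⊆ X) (t : S) :
    f (insert t X) - f X ≤ f (insert t A) - f A := by
  have hunion : insert t A ∪ X = insert t X := by
    rw [insert_union, union_eq_right.mpr hAX]
  have hinter : f A ≤ f (insert t A ∩ X) := hmono (subset_inter (subset_insert _ _) hAX)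
  linarith [hunion ▸ hsub (insert t A) X]

theorem le_add_sum_insert_sub (hmono : Monotone f)
    (hsub : ∀ Q R : Finset S, f (Q ∪ R) + f (Q ∩ R) ≤ f Q + f R) (A T : Finset S) :
    f (A ∪ T) ≤ f A + ∑ s ∈ T, (f (insert s A) - f A) := by
  induction T using Finset.induction_on with
  | empty => simp
  | @insert t T ht ih =>
    rw [union_insert, sum_insert ht]
    linarith [insert_sub_le_insert_sub_of_subset hmono hsub (subset_union_left : A ⊆ A ∪ T) t]

theorem le_add_card_mul_of_forall_insert_le (hmono : Monotone f)
    (hsub : ∀ Q R : Finset S, f (Q ∪ R) + f (Q ∩ R) ≤ f Q + f R)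
    {A B : Finset S} (hB : ∀ s, f (insert s A) ≤ f B) (R : Finset S) :
    f R ≤ f A + #R * (f B - f A) :=
  calc f R ≤ f (A ∪ R) := hmono subset_union_right
    _ ≤ f A + ∑ s ∈ R, (f (insert s A) - f A) := le_add_sum_insert_sub hmono hsub A R
    _ ≤ f A + ∑ _s ∈ R, (f B - f A) := by gcongr with s; exact hB s
    _ = f A + #R * (f B - f A) := by rw [sum_const, nsmul_eq_mul]

end Submodular

namespace IsGreedySeq

variable {S : Type*} [DecidableEq S] {f : Finset S → ℝ} {Q : ℕ → Finset S} {k θ : ℕ}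

theorem subset_succ (hQ : IsGreedySeq f Q k) (hθ : θ < k) : Q θ ⊆ Q (θ + 1) := by
  obtain ⟨s, -, hs⟩ := ((hQ.2 (θ + 1) θ.succ_pos hθ).1)
  rw [hs]
  exact subset_insert _ _

theorem insert_le (hQ : IsGreedySeq f Q k) (hθ : θ < k) (s : S) :
    f (insert s (Q θ)) ≤ f (Q (θ + 1)) :=
  (hQ.2 (θ + 1) θ.succ_pos hθ).2 s

theorem gap_succ_le (hQ : IsGreedySeq f Q k) (hmono : Monotone f)
    (hsub : ∀ Q R : Finset S, f (Q ∪ R) + f (Q ∩ R) ≤ f Q + f R)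
    {R : Finset S} (hR : #R ≤ k) (hθ : θ < k) :
    f R - f (Q (θ + 1)) ≤ (1 - 1 / (k : ℝ)) * (f R - f (Q θ)) := by
  have hk : (0 : ℝ) < k := by exact_mod_cast θ.zero_le.trans_lt hθ
  have hgain : 0 ≤ f (Q (θ + 1)) - f (Q θ) := sub_nonneg.mpr (hmono (hQ.subset_succ hθ))
  have hR' : f R ≤ f (Q θ) + k * (f (Q (θ + 1)) - f (Q θ)) :=
    (le_add_card_mul_of_forall_insert_le hmono hsub (hQ.insert_le hθ) R).trans
      (by gcongr)
  have hfrac : (f R - f (Q θ)) / k ≤ f (Q (θ + 1)) - f (Q θ) := by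
    rw [div_le_iff₀ hk]
    linarith
  calc f R - f (Q (θ + 1)) ≤ (f R - f (Q θ)) - (f R - f (Q θ)) / k := by linarith
    _ = (1 - 1 / (k : ℝ)) * (f R - f (Q θ)) := by ring

theorem gap_le (hQ : IsGreedySeq f Q k) (hmono : Monotone f)
    (hsub : ∀ Q R : Finset S, f (Q ∪ R) + f (Q ∩ R) ≤ f Q + f R) (hempty : f ∅ = 0)
    {R : Finset S} (hR : #R ≤ k) : ∀ θ ≤ k, f R - f (Q θ) ≤ (1 - 1 / (k : ℝ)) ^ θ * f R
  | 0, _ => by rw [hQ.1, hempty, pow_zero, one_mul, sub_zero]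
  | θ + 1, hθ => by
    have hk : (1 : ℝ) ≤ k := by exact_mod_cast θ.succ_pos.trans_le hθ
    have hfac : (0 : ℝ) ≤ 1 - 1 / (k : ℝ) :=
      sub_nonneg.mpr (div_le_one_of_le₀ hk k.cast_nonneg)
    calc f R - f (Q (θ + 1)) ≤ (1 - 1 / (k : ℝ)) * (f R - f (Q θ)) :=
          hQ.gap_succ_le hmono hsub hR hθ
      _ ≤ (1 - 1 / (k : ℝ)) * ((1 - 1 / (k : ℝ)) ^ θ * f R) := by
          gcongr; exact hQ.gap_le hmono hsub hempty hR θ (by omega)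
      _ = (1 - 1 / (k : ℝ)) ^ (θ + 1) * f R := by ring

end IsGreedySeq

theorem greedy_approx_bound_general {S : Type*} [DecidableEq S]
    (f : Finset S → ℝ)
    (hmono : ∀ Q R : Finset S, Q ⊆ R → f Q ≤ f R)
    (hsub : ∀ Q R : Finset S, f (Q ∪ R) + f (Q ∩ R) ≤ f Q + f R)
    (hempty : f ∅ = 0)
    (k : ℕ)
    (Q : ℕ → Finset S) (hgreedy : IsGreedySeq f Q k)
    (Qstar : Finset S) (hcard : Qstar.card ≤ k) :
    (1 - (1 - 1 / (k : ℝ)) ^ k) * f Qstar ≤ f (Q k) := by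
  have hgap := hgreedy.gap_le hmono hsub hempty hcard k le_rfl
  linarith

/-- greedy achieves a `1 − (1 − 1/k)^k` approximation for maximizing a
non-decreasing submodular set function `f` with `f(∅) = 0` under a cardinality constraint. -/
theorem greedy_approx_bound {S : Type*} [Fintype S] [DecidableEq S]
    (f : Finset S → ℝ)
    (hmono : ∀ Q R : Finset S, Q ⊆ R → f Q ≤ f R)
    (hsub : ∀ Q R : Finset S, f (Q ∪ R) + f (Q ∩ R) ≤ f Q + f R)
    (hempty : f ∅ = 0)
    (k : ℕ) (hk : 1 ≤ k)
    (Q : ℕ → Finset S) (hgreedy : IsGreedySeq f Q k)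
    (Qstar : Finset S) (hcard : Qstar.card ≤ k) :
    (1 - (1 - 1 / (k : ℝ)) ^ k) * f Qstar ≤ f (Q k) :=
  greedy_approx_bound_general f hmono hsub hempty k Q hgreedy Qstar hcard
end

section
/- Let f be a non-decreasing submodular set function on subsets of a finite set S with |S| = n, and let Q_0 = ∅, Q_1, …, Q_n = S be a greedy sequence for f of length n. Then for every θ with 1 ≤ θ ≤ n, the marginal gain at step θ satisfies f(Q_θ) − f(Q_{θ−1}) ≥ (f(S) − f(Q_{θ−1})) / (n − θ + 1). -/
/-! Submodularity bounds the gain of adding `T` to `A` by the sum of the single-element gains;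
applied to the complement of `Q (θ - 1)`, whose single gains are all dominated by the greedy
one and whose size is `n - θ + 1`, this gives the bound. -/

open Finset

section

variable {S : Type*} [DecidableEq S]

theorem union_sub_le_sum_insert_sub_of_submodular (f : Finset S → ℝ)
    (hsub : ∀ Q R : Finset S, f (Q ∪ R) + f (Q ∩ R) ≤ f Q + f R) (A T : Finset S) :
    f (A ∪ T) - f A ≤ ∑ s ∈ T, (f (insert s A) - f A) := by
  induction T using Finset.induction with
  | empty => simp
  | @insert a T ha ih =>
    -- since `a ∉ T`, the intersection below is exactly `A`
    have hinter : (A ∪ T) ∩ insert a A = A := by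
      ext x; simp only [mem_inter, mem_union, mem_insert]; grind
    have hunion : (A ∪ T) ∪ insert a A = A ∪ insert a T := by
      ext x; simp only [mem_union, mem_insert]; tauto
    have := hsub (A ∪ T) (insert a A)
    rw [hunion, hinter] at this
    rw [sum_insert ha]
    linarith

theorem IsGreedySeq.card_eq {f : Finset S → ℝ} {Q : ℕ → Finset S} {k : ℕ}
    (hQ : IsGreedySeq f Q k) {j : ℕ} (hj : j ≤ k) : #(Q j) = j := by
  induction j with
  | zero => simp [hQ.1]
  | succ j ih =>
    obtain ⟨⟨s, hs, hstep⟩, -⟩ := hQ.2 (j + 1) (by omega) hj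
    rw [Nat.add_sub_cancel] at hs hstep
    rw [hstep, card_insert_of_notMem hs, ih (by omega)]

theorem IsGreedySeq.sub_le_card_compl_mul_gain [Fintype S] {f : Finset S → ℝ}
    (hsub : ∀ Q R : Finset S, f (Q ∪ R) + f (Q ∩ R) ≤ f Q + f R)
    {Q : ℕ → Finset S} {k : ℕ} (hQ : IsGreedySeq f Q k) {θ : ℕ} (hθ1 : 1 ≤ θ) (hθk : θ ≤ k) :
    f univ - f (Q (θ - 1)) ≤ #(Q (θ - 1))ᶜ * (f (Q θ) - f (Q (θ - 1))) := by
  have hgreedy := (hQ.2 θ hθ1 hθk).2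
  calc f univ - f (Q (θ - 1))
      = f (Q (θ - 1) ∪ (Q (θ - 1))ᶜ) - f (Q (θ - 1)) := by rw [union_compl]
    _ ≤ ∑ s ∈ (Q (θ - 1))ᶜ, (f (insert s (Q (θ - 1))) - f (Q (θ - 1))) :=
        union_sub_le_sum_insert_sub_of_submodular f hsub _ _
    _ ≤ #(Q (θ - 1))ᶜ • (f (Q θ) - f (Q (θ - 1))) :=
        sum_le_card_nsmul _ _ _ fun s _ => sub_le_sub_right (hgreedy s) _
    _ = #(Q (θ - 1))ᶜ * (f (Q θ) - f (Q (θ - 1))) := nsmul_eq_mul _ _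

end

theorem greedy_marginal_gain_lower_bound_general {S : Type*} [Fintype S] [DecidableEq S]
    (f : Finset S → ℝ)
    (hsub : ∀ Q R : Finset S, f (Q ∪ R) + f (Q ∩ R) ≤ f Q + f R)
    (n : ℕ) (hn : Fintype.card S = n)
    (Q : ℕ → Finset S) (hgreedy : IsGreedySeq f Q n)
    (θ : ℕ) (hθ1 : 1 ≤ θ) (hθn : θ ≤ n) :
    (f Finset.univ - f (Q (θ - 1))) / ((n : ℝ) - (θ : ℝ) + 1) ≤
      f (Q θ) - f (Q (θ - 1)) := by
  have hcard : (#(Q (θ - 1))ᶜ : ℝ) = n - θ + 1 := by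
    rw [card_compl, hgreedy.card_eq (by omega), hn, Nat.cast_sub (by omega),
      Nat.cast_sub hθ1]
    push_cast; ring
  have hpos : (0 : ℝ) < n - θ + 1 := by
    have : (θ : ℝ) ≤ n := by exact_mod_cast hθn
    linarith
  rw [div_le_iff₀ hpos, mul_comm, ← hcard]
  exact hgreedy.sub_le_card_compl_mul_gain hsub hθ1 hθn

/-- along a full greedy sequence (of length `n = |S|`, exhausting `S`) for a
non-decreasing submodular set function, the marginal gain at step `θ` is at least
`(f(S) − f(Q_{θ−1})) / (n − θ + 1)`. -/
theorem greedy_marginal_gain_lower_bound {S : Type*} [Fintype S] [DecidableEq S]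
    (f : Finset S → ℝ)
    (hmono : ∀ Q R : Finset S, Q ⊆ R → f Q ≤ f R)
    (hsub : ∀ Q R : Finset S, f (Q ∪ R) + f (Q ∩ R) ≤ f Q + f R)
    (n : ℕ) (hn : Fintype.card S = n)
    (Q : ℕ → Finset S) (hgreedy : IsGreedySeq f Q n) (hQn : Q n = Finset.univ)
    (θ : ℕ) (hθ1 : 1 ≤ θ) (hθn : θ ≤ n) :
    (f Finset.univ - f (Q (θ - 1))) / ((n : ℝ) - (θ : ℝ) + 1) ≤
      f (Q θ) - f (Q (θ - 1)) :=
  greedy_marginal_gain_lower_bound_general f hsub n hn Q hgreedy θ hθ1 hθn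
end

section
/- Let f be a non-decreasing submodular set function on subsets of a finite set S with |S| = n and f(∅) = 0, and let Q_0 = ∅, Q_1, …, Q_n = S be a greedy sequence for f of length n. Then for every θ with 1 ≤ θ ≤ n, f(Q_θ) ≥ (θ/n) · f(S). -/
/-!
Submodularity says that the gain of adding an element can only shrink as the set grows; for a
greedy sequence this makes the successive gains `f (Q (i+1)) - f (Q i)` non-increasing: the
element added at step `i + 1` could already have been added at step `i`, where its gain was at
least as large, and the greedy choice at step `i` did at least as well.
Telescoping, `f (Q θ)` is the sum of the first `θ` of the `n` gains and `f S` the sum of all of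
them, and the average of an initial segment of a non-increasing sequence is at least the average
of the whole sequence.
-/

open Finset

theorem AntitoneOn.natCast_mul_sum_range_le {δ : ℕ → ℝ} {n θ : ℕ}
    (hδ : AntitoneOn δ (Set.Iio n)) (hθ : θ ≤ n) :
    (θ : ℝ) * ∑ i ∈ range n, δ i ≤ n * ∑ i ∈ range θ, δ i := by
  have hcross : (θ : ℝ) * ∑ i ∈ Ico θ n, δ i ≤ ((n - θ : ℕ) : ℝ) * ∑ j ∈ range θ, δ j :=
    calc (θ : ℝ) * ∑ i ∈ Ico θ n, δ i = ∑ _j ∈ range θ, ∑ i ∈ Ico θ n, δ i := by simp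
      _ ≤ ∑ j ∈ range θ, ∑ _i ∈ Ico θ n, δ j := by
        refine sum_le_sum fun j hj => sum_le_sum fun i hi => ?_
        rw [mem_range] at hj
        rw [mem_Ico] at hi
        exact hδ (Set.mem_Iio.2 (by omega)) (Set.mem_Iio.2 hi.2) (by omega)
      _ = ((n - θ : ℕ) : ℝ) * ∑ j ∈ range θ, δ j := by simp [mul_sum]
  rw [Nat.cast_sub hθ] at hcross
  rw [← sum_range_add_sum_Ico _ hθ]
  linear_combination hcross

section Submodular

variable {S : Type*} [DecidableEq S] {f : Finset S → ℝ}

theorem insert_sub_le_insert_sub_of_submodular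
    (hsub : ∀ Q R : Finset S, f (Q ∪ R) + f (Q ∩ R) ≤ f Q + f R)
    {A B : Finset S} (hAB : A ⊆ B) {s : S} (hs : s ∉ B) :
    f (insert s B) - f B ≤ f (insert s A) - f A := by
  have hunion : B ∪ insert s A = insert s B := by
    rw [union_insert, union_eq_left.2 hAB]
  have hinter : B ∩ insert s A = A := by
    rw [inter_insert_of_notMem hs, inter_eq_right.2 hAB]
  have := hsub B (insert s A)
  rw [hunion, hinter] at this
  linarith

namespace IsGreedySeq

variable {Q : ℕ → Finset S} {k : ℕ}

theorem step (h : IsGreedySeq f Q k) {i : ℕ} (hi : i < k) :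
    (∃ s, s ∉ Q i ∧ Q (i + 1) = insert s (Q i)) ∧
      ∀ s : S, f (insert s (Q i)) ≤ f (Q (i + 1)) := by
  simpa using h.2 (i + 1) (by omega) (by omega)

theorem gain_antitoneOn (hsub : ∀ Q R : Finset S, f (Q ∪ R) + f (Q ∩ R) ≤ f Q + f R)
    (h : IsGreedySeq f Q k) :
    AntitoneOn (fun i => f (Q (i + 1)) - f (Q i)) (Set.Iio k) := by
  refine antitoneOn_of_add_one_le Set.ordConnected_Iio fun i _ _ hi => ?_
  rw [Set.mem_Iio] at hi
  obtain ⟨⟨s, hs, hQs⟩, -⟩ := h.step hi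
  obtain ⟨⟨t, -, hQt⟩, hgreedy⟩ := h.step (i := i) (by omega)
  have hQ_mono : Q i ⊆ Q (i + 1) := hQt ▸ subset_insert t (Q i)
  calc f (Q (i + 1 + 1)) - f (Q (i + 1))
      = f (insert s (Q (i + 1))) - f (Q (i + 1)) := by rw [hQs]
    _ ≤ f (insert s (Q i)) - f (Q i) := insert_sub_le_insert_sub_of_submodular hsub hQ_mono hs
    _ ≤ f (Q (i + 1)) - f (Q i) := by linarith [hgreedy s]

theorem eq_sum_range_gain (h : IsGreedySeq f Q k) (hempty : f ∅ = 0) (m : ℕ) :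
    f (Q m) = ∑ i ∈ range m, (f (Q (i + 1)) - f (Q i)) := by
  rw [eq_sum_range_sub (fun i => f (Q i)) m, h.1, hempty, zero_add]

end IsGreedySeq

end Submodular

theorem greedy_prefix_lower_bound_general {S : Type*} [Fintype S] [DecidableEq S]
    (f : Finset S → ℝ)
    (hsub : ∀ Q R : Finset S, f (Q ∪ R) + f (Q ∩ R) ≤ f Q + f R)
    (hempty : f ∅ = 0)
    (n : ℕ)
    (Q : ℕ → Finset S) (hgreedy : IsGreedySeq f Q n) (hQn : Q n = Finset.univ)
    (θ : ℕ) (hθ1 : 1 ≤ θ) (hθn : θ ≤ n) :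
    ((θ : ℝ) / (n : ℝ)) * f Finset.univ ≤ f (Q θ) := by
  have hn : (0 : ℝ) < n := by exact_mod_cast hθ1.trans hθn
  rw [div_mul_eq_mul_div, div_le_iff₀ hn, ← hQn, hgreedy.eq_sum_range_gain hempty,
    hgreedy.eq_sum_range_gain hempty, mul_comm _ (n : ℝ)]
  exact (hgreedy.gain_antitoneOn hsub).natCast_mul_sum_range_le hθn

/-- along a full greedy sequence (of length `n = |S|`, exhausting `S`) for a
non-decreasing submodular set function with `f(∅) = 0`, `f(Q_θ) ≥ (θ/n) · f(S)`. -/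
theorem greedy_prefix_lower_bound {S : Type*} [Fintype S] [DecidableEq S]
    (f : Finset S → ℝ)
    (hmono : ∀ Q R : Finset S, Q ⊆ R → f Q ≤ f R)
    (hsub : ∀ Q R : Finset S, f (Q ∪ R) + f (Q ∩ R) ≤ f Q + f R)
    (hempty : f ∅ = 0)
    (n : ℕ) (hn : Fintype.card S = n)
    (Q : ℕ → Finset S) (hgreedy : IsGreedySeq f Q n) (hQn : Q n = Finset.univ)
    (θ : ℕ) (hθ1 : 1 ≤ θ) (hθn : θ ≤ n) :
    ((θ : ℝ) / (n : ℝ)) * f Finset.univ ≤ f (Q θ) :=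
  greedy_prefix_lower_bound_general f hsub hempty n Q hgreedy hQn θ hθ1 hθn
end

section
/- Let |S| = n, let k ≤ n, and let Q_0 = ∅, Q_1, …, Q_k be a greedy sequence for the total utility U of length k (part of a greedy sequence that, continued for n steps, exhausts S). Then U(Q_k) ≥ (k/n) · U(S). -/
/-!
Along a greedy sequence the marginal gains `a_i = U(Q_{i+1}) - U(Q_i)` are non-increasing: the
gain of step `i + 2` is at most what the same site would have gained one step earlier
(diminishing returns of a maximum), which the greedy choice of step `i + 1` beats. Hence the
first `k` gains, summing to `U(Q_k)`, average at least as much as all `n` gains, which sum to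
`U(Q_n) = U(S)`.
-/

open Finset

/-- Utility of a single trajectory with preference function `ψ` over a set of sites `Q`:
the maximum preference score over `Q`, with value `0` on the empty set. -/
noncomputable def trajU {S : Type*} (ψ : S → ℝ) (Q : Finset S) : ℝ :=
  if h : Q.Nonempty then Q.sup' h ψ else 0

/-- Total utility: sum of the per-trajectory utilities over all trajectories. -/
noncomputable def totalU {T S : Type*} [Fintype T] (ψ : T → S → ℝ) (Q : Finset S) : ℝ :=
  ∑ j, trajU (ψ j) Q

lemma AntitoneOn.natCast_mul_sum_range_le_mul_sum_range {a : ℕ → ℝ} {k n : ℕ}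
    (ha : AntitoneOn a (Set.Iio n)) (hk : k ≤ n) :
    (k : ℝ) * ∑ i ∈ range n, a i ≤ n * ∑ i ∈ range k, a i := by
  obtain rfl | hkn := hk.eq_or_lt
  · exact le_rfl
  have hhead : (k : ℝ) * a k ≤ ∑ i ∈ range k, a i := by
    simpa using card_nsmul_le_sum (range k) a (a k) fun i hi =>
      ha (Set.mem_Iio.2 ((mem_range.1 hi).trans hkn)) (Set.mem_Iio.2 hkn) (mem_range.1 hi).le
  have htail : ∑ i ∈ Ico k n, a i ≤ ((n : ℝ) - k) * a k := by
    simpa [Nat.cast_sub hk] using sum_le_card_nsmul (Ico k n) a (a k) fun i hi =>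
      ha (Set.mem_Iio.2 hkn) (Set.mem_Iio.2 (mem_Ico.1 hi).2) (mem_Ico.1 hi).1
  have hkn' : (k : ℝ) ≤ n := by exact_mod_cast hk
  calc (k : ℝ) * ∑ i ∈ range n, a i
      = k * ∑ i ∈ range k, a i + k * ∑ i ∈ Ico k n, a i := by
        rw [← sum_range_add_sum_Ico a hk, mul_add]
    _ ≤ k * ∑ i ∈ range k, a i + ((n : ℝ) - k) * (k * a k) := by
        linarith [mul_le_mul_of_nonneg_left htail (Nat.cast_nonneg (α := ℝ) k)]
    _ ≤ k * ∑ i ∈ range k, a i + ((n : ℝ) - k) * ∑ i ∈ range k, a i := by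
        gcongr
    _ = n * ∑ i ∈ range k, a i := by ring

lemma trajU_empty {S : Type*} (ψ : S → ℝ) : trajU ψ ∅ = 0 := by
  simp [trajU]

lemma totalU_empty {S T : Type*} [Fintype T] (ψ : T → S → ℝ) : totalU ψ ∅ = 0 := by
  simp [totalU, trajU_empty]

lemma trajU_mono {S : Type*} {ψ : S → ℝ} (hψ : ∀ s, 0 ≤ ψ s) {A B : Finset S} (hAB : A ⊆ B) :
    trajU ψ A ≤ trajU ψ B := by
  unfold trajU
  split_ifs with hA hB hB
  · exact sup'_le hA ψ fun a ha => le_sup' ψ (hAB ha)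
  · exact absurd (hA.mono hAB) hB
  · obtain ⟨b, hb⟩ := hB
    exact (hψ b).trans (le_sup' ψ hb)
  · exact le_rfl

section DiminishingReturns

variable {S : Type*} [DecidableEq S]

def HasDiminishingReturns (f : Finset S → ℝ) : Prop :=
  ∀ ⦃A B : Finset S⦄, A ⊆ B → ∀ s, f (insert s B) - f B ≤ f (insert s A) - f A

lemma HasDiminishingReturns.sum {ι : Type*} (t : Finset ι) {f : ι → Finset S → ℝ}
    (hf : ∀ i ∈ t, HasDiminishingReturns (f i)) :
    HasDiminishingReturns fun A => ∑ i ∈ t, f i A := by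
  intro A B hAB s
  simp only [← sum_sub_distrib]
  exact sum_le_sum fun i hi => hf i hi hAB s

lemma trajU_insert {ψ : S → ℝ} {s : S} (hs : 0 ≤ ψ s) (A : Finset S) :
    trajU ψ (insert s A) = max (ψ s) (trajU ψ A) := by
  obtain rfl | hA := A.eq_empty_or_nonempty
  · simp [trajU, hs]
  · rw [trajU, trajU, dif_pos (insert_nonempty s A), dif_pos hA, sup'_insert]

lemma hasDiminishingReturns_trajU {ψ : S → ℝ} (hψ : ∀ s, 0 ≤ ψ s) :
    HasDiminishingReturns (trajU ψ) := by
  intro A B hAB s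
  rw [trajU_insert (hψ s), trajU_insert (hψ s)]
  have := trajU_mono hψ hAB
  simp only [max_def]
  split_ifs <;> linarith

lemma hasDiminishingReturns_totalU {T : Type*} [Fintype T] {ψ : T → S → ℝ}
    (hψ : ∀ j s, 0 ≤ ψ j s) : HasDiminishingReturns (totalU ψ) :=
  HasDiminishingReturns.sum univ fun j _ => hasDiminishingReturns_trajU (hψ j)

end DiminishingReturns

namespace IsGreedySeq

variable {S : Type*} [DecidableEq S] {f : Finset S → ℝ} {Q : ℕ → Finset S} {n : ℕ}

lemma exists_insert (h : IsGreedySeq f Q n) {i : ℕ} (hi : i < n) :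
    ∃ s, Q (i + 1) = insert s (Q i) := by
  obtain ⟨s, -, hs⟩ := (h.2 (i + 1) (by omega) hi).1
  exact ⟨s, by simpa using hs⟩

lemma le_of_insert (h : IsGreedySeq f Q n) {i : ℕ} (hi : i < n) (s : S) :
    f (insert s (Q i)) ≤ f (Q (i + 1)) := by
  simpa using (h.2 (i + 1) (by omega) hi).2 s

lemma antitoneOn_gain (h : IsGreedySeq f Q n) (hf : HasDiminishingReturns f) :
    AntitoneOn (fun i => f (Q (i + 1)) - f (Q i)) (Set.Iio n) := by
  have hstep : ∀ i, i + 1 < n →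
      f (Q (i + 2)) - f (Q (i + 1)) ≤ f (Q (i + 1)) - f (Q i) := by
    intro i hi
    obtain ⟨s, hs⟩ := h.exists_insert (i := i) (by omega)
    obtain ⟨t, ht⟩ := h.exists_insert hi
    have hsub : Q i ⊆ Q (i + 1) := hs ▸ subset_insert s (Q i)
    have := hf hsub t
    have := h.le_of_insert (i := i) (by omega) t
    rw [ht]
    linarith
  -- Freezing the gains after step `n - 1` makes them antitone on all of `ℕ`.
  have hanti : Antitone fun m => f (Q (min m (n - 1) + 1)) - f (Q (min m (n - 1))) := by
    refine antitone_nat_of_succ_le fun m => ?_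
    rcases lt_or_ge m (n - 1) with hm | hm
    · rw [min_eq_left hm.le, min_eq_left (by omega : m + 1 ≤ n - 1)]
      exact hstep m (by omega)
    · rw [min_eq_right hm, min_eq_right (by omega : n - 1 ≤ m + 1)]
  intro i hi j hj hij
  have := hanti hij
  simp only [Set.mem_Iio] at hi hj
  dsimp only at this
  rwa [min_eq_left (by omega : i ≤ n - 1), min_eq_left (by omega : j ≤ n - 1)] at this

lemma natCast_mul_le (h : IsGreedySeq f Q n) (hf : HasDiminishingReturns f) (hf0 : f ∅ = 0)
    {k : ℕ} (hk : k ≤ n) : (k : ℝ) * f (Q n) ≤ n * f (Q k) := by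
  have htel : ∀ m, f (Q m) = ∑ i ∈ range m, (f (Q (i + 1)) - f (Q i)) := fun m => by
    rw [sum_range_sub (fun i => f (Q i)), h.1, hf0, sub_zero]
  rw [htel n, htel k]
  exact (h.antitoneOn_gain hf).natCast_mul_sum_range_le_mul_sum_range hk

end IsGreedySeq

theorem greedy_prefix_totalU_general {T S : Type*} [Fintype T] [Fintype S] [DecidableEq S]
    (ψ : T → S → ℝ) (hψ : ∀ j s, 0 ≤ ψ j s ∧ ψ j s ≤ 1)
    (n k : ℕ) (hk : k ≤ n)
    (Q : ℕ → Finset S) (hgreedy : IsGreedySeq (totalU ψ) Q n)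
    (hQn : Q n = Finset.univ) :
    ((k : ℝ) / (n : ℝ)) * totalU ψ Finset.univ ≤ totalU ψ (Q k) := by
  rcases Nat.eq_zero_or_pos n with rfl | hn
  · obtain rfl : k = 0 := by omega
    simp [hgreedy.1, totalU_empty]
  have key := hgreedy.natCast_mul_le (hasDiminishingReturns_totalU fun j s => (hψ j s).1)
    (totalU_empty ψ) hk
  rw [hQn] at key
  rw [div_mul_eq_mul_div, div_le_iff₀ (by exact_mod_cast hn), mul_comm (totalU ψ (Q k))]
  exact key

/-- if `Q` is a greedy sequence for the total utility `U` that, continued for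
`n = |S|` steps, exhausts `S`, then its length-`k` prefix satisfies `U(Q_k) ≥ (k/n)·U(S)`. -/
theorem greedy_prefix_totalU {T S : Type*} [Fintype T] [Fintype S] [DecidableEq S]
    (ψ : T → S → ℝ) (hψ : ∀ j s, 0 ≤ ψ j s ∧ ψ j s ≤ 1)
    (n k : ℕ) (hn : Fintype.card S = n) (hk : k ≤ n)
    (Q : ℕ → Finset S) (hgreedy : IsGreedySeq (totalU ψ) Q n)
    (hQn : Q n = Finset.univ) :
    ((k : ℝ) / (n : ℝ)) * totalU ψ Finset.univ ≤ totalU ψ (Q k) :=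
  greedy_prefix_totalU_general ψ hψ n k hk Q hgreedy hQn
end

section
/- For every finite nonempty set P ⊆ V of trajectory nodes and all nodes c, c', r ∈ V, the detour distance satisfies d_r(P, r) ≤ d_r(P, c) + d_r(c, c') + d_r(c', r); that is, the round-trip distance estimate computed through the cluster centers c and c' is an upper bound on the true detour distance. -/
/-! Moving the site from `s` to `t` raises every detour term `d(a,s) + d(s,b) - d(a,b)` by at
most `d_r(s,t)`, by the triangle inequality on each leg; the estimate is two such moves,
`c → c' → r`. -/

open Finset

/-- Round-trip distance between two nodes with respect to a (quasi)metric `d`. -/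
def roundTrip {V : Type*} (d : V → V → ℝ) (u v : V) : ℝ := d u v + d v u

/-- Detour distance from a trajectory (a finite nonempty set of nodes `P`) to a site `s`:
the minimum over pairs `(a,b) ∈ P × P` of `d(a,s) + d(s,b) − d(a,b)`. -/
noncomputable def detour {V : Type*} (d : V → V → ℝ) (P : Finset V) (hP : P.Nonempty)
    (s : V) : ℝ :=
  (P ×ˢ P).inf' (hP.product hP) fun p => d p.1 s + d s p.2 - d p.1 p.2

theorem detour_le_detour_add_roundTrip {V : Type*} {d : V → V → ℝ}
    (htri : ∀ u v w, d u w ≤ d u v + d v w) (P : Finset V) (hP : P.Nonempty) (s t : V) :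
    detour d P hP t ≤ detour d P hP s + roundTrip d s t := by
  obtain ⟨p, hp, hmin⟩ :=
    exists_mem_eq_inf' (hP.product hP) fun p => d p.1 s + d s p.2 - d p.1 p.2
  have hdetour : detour d P hP s = d p.1 s + d s p.2 - d p.1 p.2 := hmin
  calc detour d P hP t ≤ d p.1 t + d t p.2 - d p.1 p.2 := inf'_le _ hp
    _ ≤ (d p.1 s + d s t) + (d t s + d s p.2) - d p.1 p.2 := by gcongr <;> apply htri
    _ = detour d P hP s + roundTrip d s t := by rw [hdetour, roundTrip]; ring

theorem detour_le_estimate_general {V : Type*} (d : V → V → ℝ)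
    (htri : ∀ u v w, d u w ≤ d u v + d v w)
    (P : Finset V) (hP : P.Nonempty) (c c' r : V) :
    detour d P hP r ≤ detour d P hP c + roundTrip d c c' + roundTrip d c' r :=
  calc detour d P hP r ≤ detour d P hP c' + roundTrip d c' r :=
        detour_le_detour_add_roundTrip htri P hP c' r
    _ ≤ detour d P hP c + roundTrip d c c' + roundTrip d c' r := by
        gcongr
        exact detour_le_detour_add_roundTrip htri P hP c c'

/-- the round-trip distance estimate through the cluster centers `c` and
`c'` is an upper bound on the true detour distance:
`d_r(P, r) ≤ d_r(P, c) + d_r(c, c') + d_r(c', r)`. -/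
theorem detour_le_estimate {V : Type*} (d : V → V → ℝ)
    (hnonneg : ∀ u v, 0 ≤ d u v) (hrefl : ∀ u, d u u = 0)
    (htri : ∀ u v w, d u w ≤ d u v + d v w)
    (P : Finset V) (hP : P.Nonempty) (c c' r : V) :
    detour d P hP r ≤ detour d P hP c + roundTrip d c c' + roundTrip d c' r :=
  detour_le_estimate_general d htri P hP c c' r
end

section
/- Let E ⊆ S be a set of existing service locations, let k ≥ 1, and let Q_0 = E, Q_1, …, Q_k be a greedy sequence for U starting from E, adding k new sites from S. Then for every subset Q* ⊆ S with |Q*| ≤ k, U(Q_k) ≥ (1 − 1/e) · U(Q* ∪ E) + U(E)/e; in particular, since U(E) ≥ 0, U(Q_k) ≥ (1 − 1/e) · U(Q* ∪ E). -/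
open Finset

/-- A greedy sequence of length `k` for a set function `f`, starting from the set `E` of
existing service locations: `Q 0 = E` and at each step `θ` (for `1 ≤ θ ≤ k`), `Q θ` is
obtained from `Q (θ-1)` by inserting a new element `s_θ ∈ S \ Q (θ-1)`, chosen so that no
other single insertion gives a larger value of `f`. -/
def IsGreedySeqFrom {S : Type*} [DecidableEq S] (f : Finset S → ℝ) (E : Finset S)
    (Q : ℕ → Finset S) (k : ℕ) : Prop :=
  Q 0 = E ∧ ∀ θ, 1 ≤ θ → θ ≤ k →
    (∃ s, s ∉ Q (θ - 1) ∧ Q θ = insert s (Q (θ - 1))) ∧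
    ∀ s : S, f (insert s (Q (θ - 1))) ≤ f (Q θ)

lemma trajU_nonneg {S : Type*} {ψ : S → ℝ} (hψ : ∀ s, 0 ≤ ψ s) (Q : Finset S) :
    0 ≤ trajU ψ Q := by
  unfold trajU
  split
  · rename_i h
    obtain ⟨s, hs⟩ := h
    exact (hψ s).trans (Finset.le_sup' ψ hs)
  · exact le_refl 0

lemma le_trajU {S : Type*} (ψ : S → ℝ) {s : S} {Q : Finset S} (hs : s ∈ Q) :
    ψ s ≤ trajU ψ Q := by
  have hQ : Q.Nonempty := ⟨s, hs⟩
  simp only [trajU, dif_pos hQ]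
  exact Finset.le_sup' ψ hs

lemma trajU_key {S : Type*} [DecidableEq S] {ψ : S → ℝ} (hψ : ∀ s, 0 ≤ ψ s)
    (A B : Finset S) :
    trajU ψ (B ∪ A) ≤ trajU ψ A + ∑ s ∈ B \ A, (trajU ψ (insert s A) - trajU ψ A) := by
  have hterm : ∀ s ∈ B \ A, 0 ≤ trajU ψ (insert s A) - trajU ψ A := by
    intro s _
    have := trajU_mono hψ (Finset.subset_insert s A)
    linarith
  by_cases hBA : (B ∪ A).Nonempty
  · obtain ⟨s, hs, hval⟩ := Finset.exists_mem_eq_sup' hBA ψ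
    have hU : trajU ψ (B ∪ A) = ψ s := by simp only [trajU, dif_pos hBA, hval]
    rw [hU]
    by_cases hsA : s ∈ A
    · have := le_trajU ψ hsA
      have hsum : 0 ≤ ∑ s ∈ B \ A, (trajU ψ (insert s A) - trajU ψ A) :=
        Finset.sum_nonneg hterm
      linarith
    · have hsB : s ∈ B \ A := by
        simp only [Finset.mem_sdiff]
        exact ⟨(Finset.mem_union.mp hs).resolve_right hsA, hsA⟩
      have h1 : ψ s ≤ trajU ψ (insert s A) := le_trajU ψ (Finset.mem_insert_self s A)
      have h2 : trajU ψ (insert s A) - trajU ψ A ≤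
          ∑ t ∈ B \ A, (trajU ψ (insert t A) - trajU ψ A) :=
        Finset.single_le_sum hterm hsB
      linarith
  · have : trajU ψ (B ∪ A) = 0 := by simp only [trajU, dif_neg hBA]
    rw [this]
    have hsum : 0 ≤ ∑ s ∈ B \ A, (trajU ψ (insert s A) - trajU ψ A) :=
      Finset.sum_nonneg hterm
    have := trajU_nonneg hψ A
    linarith

/-- greedy with existing services. Starting from `E` and greedily adding
`k` new sites, for every `Q* ⊆ S` with `|Q*| ≤ k`,
`U(Q_k) ≥ (1 − 1/e)·U(Q* ∪ E) + U(E)/e`; in particular (since `U(E) ≥ 0`),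
`U(Q_k) ≥ (1 − 1/e)·U(Q* ∪ E)`. -/
theorem greedy_with_existing_services {T S : Type*} [Fintype T] [Fintype S] [DecidableEq S]
    (ψ : T → S → ℝ) (hψ : ∀ j s, 0 ≤ ψ j s ∧ ψ j s ≤ 1)
    (E : Finset S) (k : ℕ) (hk : 1 ≤ k)
    (Q : ℕ → Finset S) (hgreedy : IsGreedySeqFrom (totalU ψ) E Q k) :
    ∀ Qstar : Finset S, Qstar.card ≤ k →
      (1 - 1 / Real.exp 1) * totalU ψ (Qstar ∪ E) + totalU ψ E / Real.exp 1
          ≤ totalU ψ (Q k) ∧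
      (1 - 1 / Real.exp 1) * totalU ψ (Qstar ∪ E) ≤ totalU ψ (Q k) := by

  intro Qstar hQstar
  obtain ⟨hQ0, hstep⟩ := hgreedy
  have hψ0 : ∀ j s, 0 ≤ ψ j s := fun j s => (hψ j s).1
  set f : Finset S → ℝ := totalU ψ with hf
  -- basic facts on f
  have fmono : ∀ {A B : Finset S}, A ⊆ B → f A ≤ f B := by
    intro A B hAB
    exact Finset.sum_le_sum fun j _ => trajU_mono (hψ0 j) hAB
  have fnonneg : ∀ A : Finset S, 0 ≤ f A :=
    fun A => Finset.sum_nonneg fun j _ => trajU_nonneg (hψ0 j) A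
  have fkey : ∀ A B : Finset S,
      f (B ∪ A) ≤ f A + ∑ s ∈ B \ A, (f (insert s A) - f A) := by
    intro A B
    have := Finset.sum_le_sum (s := Finset.univ)
      (fun j (_ : j ∈ Finset.univ) => trajU_key (hψ0 j) A B)
    calc f (B ∪ A) ≤ ∑ j, (trajU (ψ j) A
          + ∑ s ∈ B \ A, (trajU (ψ j) (insert s A) - trajU (ψ j) A)) := this
      _ = f A + ∑ s ∈ B \ A, (f (insert s A) - f A) := by
          rw [Finset.sum_add_distrib, Finset.sum_comm]
          simp [hf, totalU, Finset.sum_sub_distrib]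
  -- E subset of each Q θ
  have hEQ : ∀ θ, θ ≤ k → E ⊆ Q θ := by
    intro θ
    induction θ with
    | zero => intro _; rw [hQ0]
    | succ n ih =>
      intro hn
      obtain ⟨⟨s, _, hs⟩, _⟩ := hstep (n+1) (Nat.le_add_left 1 n) hn
      simp only [Nat.add_sub_cancel] at hs
      rw [hs]
      exact (ih (Nat.le_of_succ_le hn)).trans (Finset.subset_insert s _)
  have hchain : ∀ θ, 1 ≤ θ → θ ≤ k → Q (θ-1) ⊆ Q θ := by
    intro θ h1 h2
    obtain ⟨⟨s, _, hs⟩, _⟩ := hstep θ h1 h2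
    rw [hs]; exact Finset.subset_insert s _
  -- the gap function
  set g : ℕ → ℝ := fun θ => f (Qstar ∪ E) - f (Q θ) with hg
  have hkR : (1:ℝ) ≤ (k:ℝ) := by exact_mod_cast hk
  have hkpos : (0:ℝ) < (k:ℝ) := lt_of_lt_of_le one_pos hkR
  have hrec : ∀ θ, 1 ≤ θ → θ ≤ k → g θ ≤ (1 - 1/(k:ℝ)) * g (θ-1) := by
    intro θ h1 h2
    obtain ⟨_, hgr⟩ := hstep θ h1 h2
    set A := Q (θ-1) with hA
    set δ := f (Q θ) - f A with hδ
    have hδ0 : 0 ≤ δ := by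
      have := fmono (hchain θ h1 h2); simp [hδ]; linarith
    have hsub : f (Qstar ∪ E) ≤ f A + (k:ℝ) * δ := by
      have h0 : f (Qstar ∪ E) ≤ f (Qstar ∪ A) := by
        apply fmono
        exact Finset.union_subset_union_right (hEQ (θ-1) (le_trans (Nat.sub_le θ 1) h2))
      have h1' : f (Qstar ∪ A) ≤ f A + ∑ s ∈ Qstar \ A, (f (insert s A) - f A) :=
        fkey A Qstar
      have h2' : ∑ s ∈ Qstar \ A, (f (insert s A) - f A) ≤ (k:ℝ) * δ := by
        calc ∑ s ∈ Qstar \ A, (f (insert s A) - f A)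
            ≤ ∑ _s ∈ Qstar \ A, δ := by
              apply Finset.sum_le_sum
              intro s _
              have := hgr s
              simp [hδ]; linarith
          _ = ((Qstar \ A).card : ℝ) * δ := by rw [Finset.sum_const, nsmul_eq_mul]
          _ ≤ (k:ℝ) * δ := by
              apply mul_le_mul_of_nonneg_right _ hδ0
              exact_mod_cast (Finset.card_le_card (Finset.sdiff_subset)).trans hQstar
      linarith
    -- g(θ-1) ≤ k δ, hence
    have hgd : g (θ-1) ≤ (k:ℝ) * δ := by simp [hg]; linarith
    have : g θ = g (θ-1) - δ := by simp [hg, hδ]; rw [hA]; ring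
    rw [this]
    have : g (θ-1) / (k:ℝ) ≤ δ := by
      rw [div_le_iff₀ hkpos]
      linarith [hgd]
    have hexp : (1 - 1/(k:ℝ)) * g (θ-1) = g (θ-1) - g (θ-1)/(k:ℝ) := by ring
    linarith
  -- iterate
  have hc0 : (0:ℝ) ≤ 1 - 1/(k:ℝ) := by
    have : 1/(k:ℝ) ≤ 1 := by rw [div_le_one hkpos]; exact hkR
    linarith
  have hiter : ∀ θ, θ ≤ k → g θ ≤ (1 - 1/(k:ℝ))^θ * g 0 := by
    intro θ
    induction θ with
    | zero => intro _; simp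
    | succ n ih =>
      intro hn
      have h1 := hrec (n+1) (Nat.le_add_left 1 n) hn
      simp only [Nat.add_sub_cancel] at h1
      calc g (n+1) ≤ (1 - 1/(k:ℝ)) * g n := h1
        _ ≤ (1 - 1/(k:ℝ)) * ((1 - 1/(k:ℝ))^n * g 0) :=
            mul_le_mul_of_nonneg_left (ih (Nat.le_of_succ_le hn)) hc0
        _ = (1 - 1/(k:ℝ))^(n+1) * g 0 := by ring
  have hg0 : 0 ≤ g 0 := by
    simp only [hg, hQ0, sub_nonneg]
    exact fmono Finset.subset_union_right
  have hek : (1 - 1/(k:ℝ))^k ≤ Real.exp (-1) := by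
    have h1 : 1 - 1/(k:ℝ) ≤ Real.exp (-(1/(k:ℝ))) := by
      have := Real.add_one_le_exp (-(1/(k:ℝ)))
      linarith
    calc (1 - 1/(k:ℝ))^k ≤ (Real.exp (-(1/(k:ℝ))))^k :=
          pow_le_pow_left₀ hc0 h1 k
      _ = Real.exp (-(1/(k:ℝ)) * k) := by rw [← Real.exp_nat_mul]; ring_nf
      _ = Real.exp (-1) := by
          congr 1
          field_simp
  have hfinal : g k ≤ Real.exp (-1) * g 0 := by
    calc g k ≤ (1 - 1/(k:ℝ))^k * g 0 := hiter k le_rfl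
      _ ≤ Real.exp (-1) * g 0 := mul_le_mul_of_nonneg_right hek hg0
  have hexp1 : Real.exp (-1) = 1 / Real.exp 1 := by
    rw [Real.exp_neg]; ring
  have hepos : (0:ℝ) < Real.exp 1 := Real.exp_pos 1
  have hmain : (1 - 1 / Real.exp 1) * f (Qstar ∪ E) + f E / Real.exp 1 ≤ f (Q k) := by
    have h1 : f (Qstar ∪ E) - f (Q k) ≤ (1/Real.exp 1) * (f (Qstar ∪ E) - f E) := by
      have := hfinal
      simp only [hg, hQ0, hexp1] at this ⊢
      linarith
    have : (1/Real.exp 1) * (f (Qstar ∪ E) - f E)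
        = f (Qstar ∪ E) - ((1 - 1/Real.exp 1) * f (Qstar ∪ E) + f E / Real.exp 1) := by
      field_simp; ring
    linarith
  refine ⟨hmain, ?_⟩
  have hE0 : 0 ≤ f E := fnonneg E
  have : 0 ≤ f E / Real.exp 1 := div_nonneg hE0 hepos.le
  linarith
end
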